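/- arXiv:1611.07430 — 3 statements merged into one kernel-verified Lean document; each statement's English description precedes it below -/
import Mathlib

section
/- Let X and Y be affine schemes of finite type over an algebraically closed valued field k̄, and let f : X → Y be a finite morphism. If B is a bounded subset of Y(k̄), then f⁻¹(B) is a bounded subset of X(k̄). -/
/-- A subset of the set of `k̄`-points of an affine `k̄`-scheme `Spec A` (points being
`k̄`-algebra homomorphisms `A → k̄`) is bounded for a valuation `ω` if the valuation of
every regular function is bounded below on it. -/
def IsBoundedPointSet {K A : Type*} [Field K] [CommRing A] [Algebra K A]
    (ω : K → WithTop ℝ) (B : Set (A →ₐ[K] K)) : Prop :=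
  ∀ a : A, ∃ m : ℝ, ∀ x ∈ B, ((m : ℝ) : WithTop ℝ) ≤ ω (x a)

section aux
variable {K : Type*} [Field K] (ω : K → WithTop ℝ)

lemma omega_pow (hω1 : ω 1 = 0) (hωmul : ∀ x y : K, ω (x * y) = ω x + ω y)
    (t : K) (r : ℝ) (ht : ω t = (r : ℝ)) (k : ℕ) :
    ω (t ^ k) = (((k : ℝ) * r : ℝ) : WithTop ℝ) := by
  induction k with
  | zero => simpa using hω1
  | succ k ih =>
    rw [pow_succ, hωmul, ih, ht, ← WithTop.coe_add, WithTop.coe_eq_coe]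
    push_cast
    ring

lemma omega_neg (hω1 : ω 1 = 0) (hωmul : ∀ x y : K, ω (x * y) = ω x + ω y)
    (y : K) : ω (-y) = ω y := by
  have h1 : ω (-1 : K) = 0 := by
    have := hωmul (-1) (-1)
    rw [neg_mul_neg, one_mul, hω1] at this
    rcases h : ω (-1 : K) with _ | r
    · rw [WithTop.none_eq_top] at h
      rw [h] at this; simp at this
    · rw [WithTop.some_eq_coe] at h
      rw [h, ← WithTop.coe_add] at this
      have : r + r = 0 := by exact_mod_cast this.symm
      have : r = 0 := by linarith
      rw [this]; exact WithTop.coe_zero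
  have := hωmul (-1) y
  rw [neg_one_mul, h1, zero_add] at this
  exact this

lemma omega_sum (hω0 : ω 0 = ⊤)
    (hωadd : ∀ x y : K, min (ω x) (ω y) ≤ ω (x + y))
    {ι : Type*} (s : Finset ι) (f : ι → K) (c : WithTop ℝ)
    (h : ∀ i ∈ s, c ≤ ω (f i)) : c ≤ ω (∑ i ∈ s, f i) := by
  classical
  induction s using Finset.cons_induction with
  | empty => simp [hω0]
  | cons a s ha ih =>
    rw [Finset.sum_cons]
    refine le_trans ?_ (hωadd _ _)
    exact le_min (h a (Finset.mem_cons_self _ _))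
      (ih fun i hi => h i (Finset.mem_cons_of_mem hi))

lemma root_bound
    (hω0 : ω 0 = ⊤) (hω1 : ω 1 = 0)
    (hωmul : ∀ x y : K, ω (x * y) = ω x + ω y)
    (hωadd : ∀ x y : K, min (ω x) (ω y) ≤ ω (x + y))
    (q : Polynomial K) (hq : q.Monic) (t : K) (ht : q.eval t = 0)
    (m : ℝ) (hc : ∀ i < q.natDegree, (m : WithTop ℝ) ≤ ω (q.coeff i)) :
    ((min m 0 : ℝ) : WithTop ℝ) ≤ ω t := by
  by_contra hcon
  push_neg at hcon
  rcases hr : ω t with _ | r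
  · rw [WithTop.none_eq_top] at hr
    rw [hr] at hcon; exact (not_top_lt hcon).elim
  rw [WithTop.some_eq_coe] at hr
  rw [hr, WithTop.coe_lt_coe] at hcon
  have hr0 : r < 0 := lt_of_lt_of_le hcon (min_le_right _ _)
  have hrm : r < m := lt_of_lt_of_le hcon (min_le_left _ _)
  set n := q.natDegree with hn
  have hn1 : 1 ≤ n := by
    by_contra hn0
    push_neg at hn0
    interval_cases n
    · have : q = 1 := hq.natDegree_eq_zero.mp hn.symm
      rw [this] at ht
      simp at ht
  have heval := Polynomial.eval_eq_sum_range (p := q) t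
  rw [ht, Finset.sum_range_succ, hq.coeff_natDegree, one_mul] at heval
  have hpow : t ^ n = -∑ i ∈ Finset.range n, q.coeff i * t ^ i := by
    linear_combination -heval
  have hωpow : ω (t ^ n) = (((n : ℝ) * r : ℝ) : WithTop ℝ) :=
    omega_pow ω hω1 hωmul t r hr n
  have hterm : ∀ i ∈ Finset.range n,
      ((m + ((n : ℝ) - 1) * r : ℝ) : WithTop ℝ) ≤ ω (q.coeff i * t ^ i) := by
    intro i hi
    rw [Finset.mem_range] at hi
    rw [hωmul, omega_pow ω hω1 hωmul t r hr i]
    have h1 : (m : WithTop ℝ) ≤ ω (q.coeff i) := hc i hi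
    have h2 : ((n : ℝ) - 1) * r ≤ (i : ℝ) * r := by
      apply mul_le_mul_of_nonpos_right _ hr0.le
      have : (i : ℝ) ≤ (n : ℝ) - 1 := by
        have : (i : ℝ) + 1 ≤ (n : ℝ) := by exact_mod_cast hi
        linarith
      linarith
    calc ((m + ((n : ℝ) - 1) * r : ℝ) : WithTop ℝ)
        = (m : WithTop ℝ) + ((((n : ℝ) - 1) * r : ℝ) : WithTop ℝ) := by
          rw [← WithTop.coe_add]
      _ ≤ ω (q.coeff i) + (((i : ℝ) * r : ℝ) : WithTop ℝ) := by
          exact add_le_add h1 (by exact_mod_cast h2)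
      _ = ω (q.coeff i) + ω (t ^ i) := by rw [omega_pow ω hω1 hωmul t r hr i]
      _ = ω (q.coeff i) + (((i : ℝ) * r : ℝ) : WithTop ℝ) := by
          rw [omega_pow ω hω1 hωmul t r hr i]
      _ ≤ ω (q.coeff i) + (((i : ℝ) * r : ℝ) : WithTop ℝ) := le_refl _
  have hsum : ((m + ((n : ℝ) - 1) * r : ℝ) : WithTop ℝ) ≤
      ω (∑ i ∈ Finset.range n, q.coeff i * t ^ i) :=
    omega_sum ω hω0 hωadd _ _ _ hterm
  have heq : ω (t ^ n) = ω (∑ i ∈ Finset.range n, q.coeff i * t ^ i) := by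
    rw [hpow, omega_neg ω hω1 hωmul]
  rw [heq] at hωpow
  rw [hωpow, WithTop.coe_le_coe] at hsum
  have : m ≤ r := by
    have hn' : (1 : ℝ) ≤ (n : ℝ) := by exact_mod_cast hn1
    nlinarith [hsum]
  linarith

end aux

/-- Let `X = Spec A` and `Y = Spec B` be affine schemes of finite type
over an algebraically closed valued field `k̄`, and let `f : X → Y` be a finite morphism
(i.e. `A` is a module-finite `B`-algebra; on points, `f` is precomposition with
`B → A`).  If `S` is a bounded subset of `Y(k̄)`, then `f⁻¹(S)` is a bounded subset of
`X(k̄)`. -/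
theorem finite_morphism_preimage_bounded
    {K : Type*} [Field K] [IsAlgClosed K]
    (ω : K → WithTop ℝ)
    (hω0 : ω 0 = ⊤) (hω1 : ω 1 = 0)
    (hωmul : ∀ x y : K, ω (x * y) = ω x + ω y)
    (hωadd : ∀ x y : K, min (ω x) (ω y) ≤ ω (x + y))
    (A B : Type*) [CommRing A] [CommRing B] [Algebra K A] [Algebra K B]
    [Algebra.FiniteType K A] [Algebra.FiniteType K B]
    [Algebra B A] [IsScalarTower K B A] [Module.Finite B A]
    (S : Set (B →ₐ[K] K)) (hS : IsBoundedPointSet ω S) :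
    IsBoundedPointSet ω
      {x : A →ₐ[K] K | x.comp (IsScalarTower.toAlgHom K B A) ∈ S} := by
  intro a
  -- `a` is integral over `B`
  obtain ⟨p, hpm, hpa⟩ : IsIntegral B a := Algebra.IsIntegral.isIntegral a
  -- choose lower bounds for the coefficients
  choose c hc using hS
  obtain ⟨m, hm⟩ : ∃ m : ℝ, ∀ i ∈ Finset.range p.natDegree, m ≤ c (p.coeff i) := by
    rcases ((Finset.range p.natDegree).image (fun i => -(c (p.coeff i)))).exists_le
      with ⟨M, hM⟩
    refine ⟨-M, fun i hi => ?_⟩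
    have := hM _ (Finset.mem_image_of_mem _ hi)
    linarith
  refine ⟨min m 0, ?_⟩
  intro x hx
  have hxS : x.comp (IsScalarTower.toAlgHom K B A) ∈ S := hx
  set φ : B →+* K := (x.comp (IsScalarTower.toAlgHom K B A) : B →+* K) with hφ
  set q : Polynomial K := p.map φ with hq
  have hqm : q.Monic := hpm.map φ
  have hqe : q.eval (x a) = 0 := by
    have h2 : (x : A →+* K) (Polynomial.eval₂ (algebraMap B A) a p) = 0 := by
      rw [hpa]; exact map_zero _
    rw [Polynomial.hom_eval₂] at h2
    have hφ' : φ = (x : A →+* K).comp (algebraMap B A) := by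
      ext b; simp [φ, IsScalarTower.toAlgHom_apply]
    rw [hq, Polynomial.eval_map, hφ']
    exact h2
  have hdeg : q.natDegree = p.natDegree := hpm.natDegree_map φ
  have hcq : ∀ i < q.natDegree, ((m : ℝ) : WithTop ℝ) ≤ ω (q.coeff i) := by
    intro i hi
    rw [hdeg] at hi
    have h1 : q.coeff i = φ (p.coeff i) := Polynomial.coeff_map φ i
    have h2 : ((c (p.coeff i) : ℝ) : WithTop ℝ) ≤ ω (φ (p.coeff i)) :=
      hc (p.coeff i) _ hxS
    have h3 : (m : ℝ) ≤ c (p.coeff i) := hm i (Finset.mem_range.mpr hi)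
    rw [h1]
    exact le_trans (by exact_mod_cast h3) h2
  exact root_bound ω hω0 hω1 hωmul hωadd q hqm (x a) hqe m hcq
end

section
/- Let T be a torus over a field k with a nonarchimedean valuation ω, let g ∈ T(k), and suppose g has an eigenvalue α with ω(α) ≠ 0 in some faithful finite-dimensional representation defined over k. Then T admits a nontrivial character defined over k; in particular, T contains a nontrivial k-split subtorus. -/
/-- Let `T` be a torus over a field `k` with a nonarchimedean valuation
`ω` (with Henselian valuation ring, so `ω` extends uniquely to, and is Galois-invariant
on, a splitting field `K` of `T`).  Via the equivalence of categories, `T` is described by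
its character lattice `X = X*(T_K)` together with the action of the Galois group
`Γ = Gal(K/k)`, and an element `g ∈ T(k)` is a `Γ`-equivariant homomorphism
`X → Kˣ`, `χ ↦ χ(g)`; the eigenvalues of `g` in any (faithful) finite-dimensional
representation are the values `χ(g)`.  If `g` has an eigenvalue `α = χ(g)` with
`ω α ≠ 0`, then the character `χ₀ = ∑_{γ ∈ Γ} γ·χ` of `T` is nontrivial and fixed by
`Γ`, i.e. `T` admits a nontrivial character defined over `k`; in particular `T` contains
a nontrivial `k`-split subtorus. -/
theorem torus_isotropic_of_eigenvalue_valuation_ne_zero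
    {K : Type*} [Field K]
    (ω : Kˣ → ℝ) (hωmul : ∀ x y : Kˣ, ω (x * y) = ω x + ω y)
    {Γ : Type*} [Group Γ] [Finite Γ]
    (X : Type*) [AddCommGroup X] [DistribMulAction Γ X]
    (g : X →+ Additive Kˣ)
    (hGal : ∀ (γ : Γ) (χ : X), ω (Additive.toMul (g (γ • χ))) =
      ω (Additive.toMul (g χ)))
    (hα : ∃ χ : X, ω (Additive.toMul (g χ)) ≠ 0) :
    ∃ χ₀ : X, χ₀ ≠ 0 ∧ ∀ γ : Γ, γ • χ₀ = χ₀ := by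
  obtain ⟨χ, hχ⟩ := hα
  cases nonempty_fintype Γ
  -- The additive map `f : X → ℝ`, `ψ ↦ ω (g ψ)`.
  let f : X →+ ℝ :=
    { toFun := fun ψ => ω (Additive.toMul (g ψ))
      map_zero' := by
        have h := hωmul 1 1
        simp only [mul_one] at h
        have h1 : ω (1 : Kˣ) = 0 := by linarith
        simpa using h1
      map_add' := fun a b => by
        simp only [map_add]
        exact hωmul _ _ }
  refine ⟨∑ γ : Γ, γ • χ, ?_, ?_⟩
  · intro h0
    have hf : f (∑ γ : Γ, γ • χ) = 0 := by rw [h0, map_zero]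
    rw [map_sum] at hf
    have : ∀ γ : Γ, f (γ • χ) = f χ := fun γ => hGal γ χ
    have hf2 : (Fintype.card Γ : ℝ) * f χ = 0 := by
      rw [← hf]
      rw [Finset.sum_congr rfl fun γ _ => this γ, Finset.sum_const, nsmul_eq_mul,
        Finset.card_univ]
    have hcard : (0 : ℝ) < (Fintype.card Γ : ℝ) := by
      exact_mod_cast Fintype.card_pos
    have : f χ = 0 := by
      rcases mul_eq_zero.1 hf2 with h | h
      · exact absurd h (ne_of_gt hcard)
      · exact h
    exact hχ this
  · intro γ
    rw [Finset.smul_sum]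
    exact Fintype.sum_equiv (Equiv.mulLeft γ) _ _ (fun γ' => by
      simp [mul_smul])
end

section
/- Let Γ be a group acting by isometries on a complete CAT(0) metric space with bounded orbits. Then Γ has a fixed point. -/
set_option maxHeartbeats 1600000 in
/-- **Bruhat–Tits fixed point theorem.** Let `Γ` be a group acting by
isometries on a complete CAT(0) (equivalently, for complete spaces, Bruhat–Tits/NPC)
metric space `X`, i.e. a complete geodesic space in which every pair of points has a
midpoint satisfying the CN (Bruhat–Tits) comparison inequality.  If some orbit is bounded,
then `Γ` has a fixed point. -/
theorem bruhat_tits_fixed_point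
    {X : Type*} [MetricSpace X] [CompleteSpace X] [Nonempty X]
    (hCAT : ∀ x y : X, ∃ m : X, ∀ z : X,
      dist z m ^ 2 ≤ (dist z x ^ 2 + dist z y ^ 2) / 2 - dist x y ^ 2 / 4)
    {Γ : Type*} [Group Γ] [MulAction Γ X]
    (hiso : ∀ γ : Γ, Isometry (fun x : X => γ • x))
    (horb : ∃ x : X, Bornology.IsBounded (MulAction.orbit Γ x)) :
    ∃ x : X, ∀ γ : Γ, γ • x = x := by
  obtain ⟨x, hx⟩ := horb
  set S : Set X := MulAction.orbit Γ x with hSdef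
  have hxS : x ∈ S := MulAction.mem_orbit_self x
  obtain ⟨C, hC⟩ := Metric.isBounded_iff.mp hx
  set r : X → ℝ := fun z => sSup ((fun s => dist z s) '' S) with hrdef
  have hbdd : ∀ z : X, BddAbove ((fun s => dist z s) '' S) := by
    intro z
    refine ⟨dist z x + C, ?_⟩
    rintro _ ⟨s, hs, rfl⟩
    calc dist z s ≤ dist z x + dist x s := dist_triangle _ _ _
      _ ≤ dist z x + C := by have := hC hxS hs; linarith
  have hne : ∀ z : X, ((fun s => dist z s) '' S).Nonempty :=
    fun z => ⟨dist z x, ⟨x, hxS, rfl⟩⟩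
  have hle : ∀ z : X, ∀ s ∈ S, dist z s ≤ r z :=
    fun z s hs => le_csSup (hbdd z) ⟨s, hs, rfl⟩
  have hr_le : ∀ z : X, ∀ B : ℝ, (∀ s ∈ S, dist z s ≤ B) → r z ≤ B := by
    intro z B h
    exact csSup_le (hne z) (by rintro _ ⟨s, hs, rfl⟩; exact h s hs)
  have hrnonneg : ∀ z : X, 0 ≤ r z :=
    fun z => le_trans dist_nonneg (hle z x hxS)
  set r0 : ℝ := ⨅ z, r z with hr0def
  have hbb : BddBelow (Set.range r) := ⟨0, by rintro _ ⟨z, rfl⟩; exact hrnonneg z⟩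
  have hr0le : ∀ z : X, r0 ≤ r z := fun z => ciInf_le hbb z
  have hr0nonneg : 0 ≤ r0 := le_ciInf hrnonneg
  -- Key CN estimate via the midpoint
  have key : ∀ z w : X, dist z w ^ 2 ≤ 2 * r z ^ 2 + 2 * r w ^ 2 - 4 * r0 ^ 2 := by
    intro z w
    obtain ⟨m, hm⟩ := hCAT z w
    set B : ℝ := (r z ^ 2 + r w ^ 2) / 2 - dist z w ^ 2 / 4 with hBdef
    have hsB : ∀ s ∈ S, dist s m ^ 2 ≤ B := by
      intro s hs
      have h1 := hm s
      have h2 : dist s z ≤ r z := by rw [dist_comm]; exact hle z s hs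
      have h3 : dist s w ≤ r w := by rw [dist_comm]; exact hle w s hs
      have h2' : dist s z ^ 2 ≤ r z ^ 2 := by nlinarith [dist_nonneg (x := s) (y := z)]
      have h3' : dist s w ^ 2 ≤ r w ^ 2 := by nlinarith [dist_nonneg (x := s) (y := w)]
      rw [hBdef]; nlinarith
    have hB0 : 0 ≤ B := le_trans (sq_nonneg (dist x m)) (hsB x hxS)
    have hrm : r m ≤ Real.sqrt B := by
      apply hr_le
      intro s hs
      rw [dist_comm]
      have := hsB s hs
      nlinarith [Real.sq_sqrt hB0, Real.sqrt_nonneg B, dist_nonneg (x := s) (y := m),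
        abs_nonneg (dist s m)]
    have hrm2 : r m ^ 2 ≤ B := by
      have h0 : 0 ≤ r m := hrnonneg m
      nlinarith [Real.sq_sqrt hB0, Real.sqrt_nonneg B]
    have h4 : r0 ^ 2 ≤ r m ^ 2 := by nlinarith [hr0le m, hrnonneg m]
    rw [hBdef] at hrm2
    nlinarith
  -- approximate minimizers
  have happrox : ∀ ε : ℝ, 0 < ε → ∃ z : X, r z < r0 + ε := by
    intro ε hε
    exact exists_lt_of_ciInf_lt (by linarith)
  have hchoice : ∀ n : ℕ, ∃ z : X, r z < r0 + 1 / (n + 1) :=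
    fun n => happrox _ (by positivity)
  choose u hu using hchoice
  have hcauchy : CauchySeq u := by
    rw [Metric.cauchySeq_iff]
    intro δ hδ
    obtain ⟨ε, hεpos, hε1, hε2⟩ :
        ∃ ε : ℝ, 0 < ε ∧ ε ≤ 1 ∧ ε * (8 * r0 + 5) ≤ δ ^ 2 := by
      refine ⟨min 1 (δ ^ 2 / (8 * r0 + 5)), lt_min one_pos (by positivity),
        min_le_left _ _, ?_⟩
      have h := min_le_right 1 (δ ^ 2 / (8 * r0 + 5))
      have hpos : (0:ℝ) < 8 * r0 + 5 := by linarith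
      calc min 1 (δ ^ 2 / (8 * r0 + 5)) * (8 * r0 + 5)
          ≤ (δ ^ 2 / (8 * r0 + 5)) * (8 * r0 + 5) := by
            apply mul_le_mul_of_nonneg_right h (le_of_lt hpos)
        _ = δ ^ 2 := by field_simp
    obtain ⟨N, hN⟩ := exists_nat_gt (1 / ε)
    refine ⟨N, fun m hm n hn => ?_⟩
    have hsmall : ∀ k : ℕ, N ≤ k → r (u k) < r0 + ε := by
      intro k hk
      have h1 : (1:ℝ) / (k + 1) < ε := by
        rw [div_lt_iff₀ (by positivity)]
        rw [div_lt_iff₀ hεpos] at hN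
        have : (N:ℝ) ≤ k := Nat.cast_le.mpr hk
        nlinarith
      exact lt_trans (hu k) (by linarith)
    have h1 := hsmall m hm
    have h2 := hsmall n hn
    have hk := key (u m) (u n)
    have hq1 : r (u m) ^ 2 < (r0 + ε) ^ 2 := by
      nlinarith [hrnonneg (u m), hr0le (u m)]
    have hq2 : r (u n) ^ 2 < (r0 + ε) ^ 2 := by
      nlinarith [hrnonneg (u n), hr0le (u n)]
    have hd2 : dist (u m) (u n) ^ 2 < δ ^ 2 := by
      have e1 : dist (u m) (u n) ^ 2 < 4 * (r0 + ε) ^ 2 - 4 * r0 ^ 2 := by linarith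
      have e2 : 4 * (r0 + ε) ^ 2 - 4 * r0 ^ 2 = 8 * r0 * ε + 4 * ε ^ 2 := by ring
      have e3 : 8 * r0 * ε + 4 * ε ^ 2 ≤ (8 * r0 + 4) * ε := by nlinarith
      have e4 : (8 * r0 + 4) * ε < ε * (8 * r0 + 5) := by nlinarith
      linarith
    by_contra hcon
    push_neg at hcon
    nlinarith [dist_nonneg (x := u m) (y := u n)]
  obtain ⟨c, hc⟩ := cauchySeq_tendsto_of_complete hcauchy
  have hrc : r c = r0 := by
    refine le_antisymm ?_ (hr0le c)
    apply le_of_forall_pos_le_add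
    intro ε hε
    obtain ⟨N1, hN1⟩ := Metric.tendsto_atTop.mp hc (ε / 2) (by positivity)
    obtain ⟨N2, hN2⟩ := exists_nat_gt (2 / ε)
    set n := max N1 N2 with hndef
    have hd : dist (u n) c < ε / 2 := hN1 n (le_max_left _ _)
    have hfrac : (1:ℝ) / (n + 1) < ε / 2 := by
      rw [div_lt_iff₀ (by positivity)]
      rw [div_lt_iff₀ hε] at hN2
      have : (N2:ℝ) ≤ n := Nat.cast_le.mpr (le_max_right _ _)
      nlinarith
    have hrcle : r c ≤ r (u n) + dist c (u n) := by
      apply hr_le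
      intro s hs
      calc dist c s ≤ dist c (u n) + dist (u n) s := dist_triangle _ _ _
        _ ≤ dist c (u n) + r (u n) := by have := hle (u n) s hs; linarith
        _ = r (u n) + dist c (u n) := by ring
    have := hu n
    rw [dist_comm] at hd
    linarith
  refine ⟨c, fun γ => ?_⟩
  have hrγ : r (γ • c) ≤ r0 := by
    apply hr_le
    intro s hs
    have hsmem : γ⁻¹ • s ∈ S := by
      obtain ⟨g, rfl⟩ := hs
      exact ⟨γ⁻¹ * g, (mul_smul γ⁻¹ g x).symm ▸ rfl⟩
    have hd : dist (γ • c) s = dist c (γ⁻¹ • s) := by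
      have h := (hiso γ).dist_eq c (γ⁻¹ • s)
      simp only [smul_inv_smul] at h
      exact h.symm ▸ rfl
    rw [hd]
    calc dist c (γ⁻¹ • s) ≤ r c := hle c _ hsmem
      _ = r0 := hrc
  have heq : r (γ • c) = r0 := le_antisymm hrγ (hr0le _)
  have hk := key c (γ • c)
  rw [hrc, heq] at hk
  have hd0 : dist c (γ • c) = 0 := by
    nlinarith [dist_nonneg (x := c) (y := γ • c), sq_nonneg (dist c (γ • c))]
  exact (eq_of_dist_eq_zero (by rw [dist_comm]; exact hd0))
end
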